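/- arXiv:1204.0549 — 3 statements merged into one kernel-verified Lean document; each statement's English description precedes it below -/
import Mathlib

section
/- Let (Ω, F, P) be a probability space, let G_1, ..., G_n be sub-σ-algebras of F, and let p_1, ..., p_n be random variables with values in [0,1] such that the σ-algebras σ(p_1) ∨ G_1, ..., σ(p_n) ∨ G_n are mutually independent. Let G = G_1 ∨ ⋯ ∨ G_n. Then E[∏_{i=1}^n p_i | G] = ∏_{i=1}^n E[p_i | G_i] almost surely. -/
/-!
The right-hand side is bounded and `⨆ i, G i`-measurable, so it suffices to compare its integrals
with those of `∏ i, p i` over the boxes `⋂ i, s i` with `s i ∈ G i`; these form a π-system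
containing `univ` and generating `⨆ i, G i`. Each `s i` and both `p i` and `E[p i | G i]` are
measurable for `σ(p i) ⊔ G i`, so on a box independence splits both integrals into products of
`∫ in s i, p i` and `∫ in s i, E[p i | G i]`, which agree factor by factor.
-/

open MeasureTheory ProbabilityTheory MeasurableSpace

theorem setIntegral_eq_of_isPiSystem {α E : Type*} [NormedAddCommGroup E] [NormedSpace ℝ E]
    {m m0 : MeasurableSpace α} {μ : Measure α} (hm : m ≤ m0) {s : Set (Set α)}
    (h_eq : m = generateFrom s) (h_inter : IsPiSystem s) (h_univ : Set.univ ∈ s)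
    {f g : α → E} (hf : Integrable f μ) (hg : Integrable g μ)
    (basic : ∀ t ∈ s, ∫ x in t, f x ∂μ = ∫ x in t, g x ∂μ) {t : Set α}
    (ht : MeasurableSet[m] t) :
    ∫ x in t, f x ∂μ = ∫ x in t, g x ∂μ := by
  refine induction_on_inter h_eq h_inter ?_ basic ?_ ?_ t ht
  · simp
  · intro u hu hfg
    have h_total := basic _ h_univ
    rw [setIntegral_univ, setIntegral_univ] at h_total
    rw [setIntegral_compl (hm u hu) hf, setIntegral_compl (hm u hu) hg, hfg, h_total]
  · intro u hdisj hu hfg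
    have hu' : ∀ k, MeasurableSet[m0] (u k) := fun k => hm _ (hu k)
    rw [integral_iUnion hu' hdisj hf.integrableOn, integral_iUnion hu' hdisj hg.integrableOn]
    exact tsum_congr hfg

theorem exists_iInter_eq_of_mem_piiUnionInter {ι Ω : Type*} {m : ι → MeasurableSpace Ω}
    {S : Set ι} {t : Set Ω} (ht : t ∈ piiUnionInter (fun i => {s | MeasurableSet[m i] s}) S) :
    ∃ s : ι → Set Ω, (∀ i, MeasurableSet[m i] (s i)) ∧ t = ⋂ i, s i := by
  classical
  obtain ⟨T, -, s, hs, rfl⟩ := ht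
  refine ⟨fun i => if i ∈ T then s i else Set.univ, fun i => ?_, ?_⟩
  · dsimp only
    split_ifs with hi
    exacts [hs i hi, MeasurableSet.univ]
  · ext ω
    simp only [Set.mem_iInter]
    refine forall_congr' fun i => ?_
    split_ifs with hi <;> simp [hi]

theorem ae_eq_condExp_iSup_of_forall_setIntegral_iInter_eq {ι Ω E : Type*}
    {mΩ : MeasurableSpace Ω} [NormedAddCommGroup E] [NormedSpace ℝ E] [CompleteSpace E]
    {μ : Measure Ω} [IsFiniteMeasure μ] {m : ι → MeasurableSpace Ω} (hm : ∀ i, m i ≤ mΩ)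
    {f g : Ω → E} (hf : Integrable f μ) (hg : Integrable g μ)
    (hgm : AEStronglyMeasurable[⨆ i, m i] g μ)
    (h : ∀ s : ι → Set Ω, (∀ i, MeasurableSet[m i] (s i)) →
      ∫ ω in ⋂ i, s i, g ω ∂μ = ∫ ω in ⋂ i, s i, f ω ∂μ) :
    g =ᵐ[μ] μ[f | ⨆ i, m i] := by
  have hle : ⨆ i, m i ≤ mΩ := iSup_le hm
  set boxes := piiUnionInter (fun i => {s | MeasurableSet[m i] s}) Set.univ
  have h_gen : ⨆ i, m i = generateFrom boxes := by
    simpa using (generateFrom_piiUnionInter_measurableSet m Set.univ).symm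
  have h_pi : IsPiSystem boxes :=
    isPiSystem_piiUnionInter _ (fun i => @isPiSystem_measurableSet Ω (m i)) _
  have h_univ : Set.univ ∈ boxes := ⟨∅, by simp, fun _ => Set.univ, by simp, by simp⟩
  have h_boxes : ∀ t ∈ boxes, ∫ ω in t, g ω ∂μ = ∫ ω in t, f ω ∂μ := by
    intro t ht
    obtain ⟨s, hs, rfl⟩ := exists_iInter_eq_of_mem_piiUnionInter ht
    exact h s hs
  exact ae_eq_condExp_of_forall_setIntegral_eq hle hf (fun _ _ _ => hg.integrableOn)
    (fun t ht _ => setIntegral_eq_of_isPiSystem hle h_gen h_pi h_univ hg hf h_boxes ht) hgm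

theorem ProbabilityTheory.iIndep.setIntegral_iInter_prod {ι Ω 𝕜 : Type*} [Fintype ι]
    [RCLike 𝕜] {mΩ : MeasurableSpace Ω} {μ : Measure Ω} {m : ι → MeasurableSpace Ω}
    (hind : iIndep m μ) (hm : ∀ i, m i ≤ mΩ) {X : ι → Ω → 𝕜}
    (hX : ∀ i, StronglyMeasurable[m i] (X i))
    {s : ι → Set Ω} (hs : ∀ i, MeasurableSet[m i] (s i)) :
    ∫ ω in ⋂ i, s i, ∏ i, X i ω ∂μ = ∏ i, ∫ ω in s i, X i ω ∂μ := by
  have h_indep : iIndepFun (fun i => (s i).indicator (X i)) μ := by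
    rw [iIndepFun_iff_iIndep]
    refine iIndep_of_iIndep_of_le hind fun i => ?_
    exact ((hX i).measurable.indicator (hs i)).comap_le
  have h_meas : ∀ i, AEStronglyMeasurable ((s i).indicator (X i)) μ := fun i =>
    (((hX i).indicator (hs i)).mono (hm i)).aestronglyMeasurable
  calc ∫ ω in ⋂ i, s i, ∏ i, X i ω ∂μ
      = ∫ ω, ∏ i, (s i).indicator (X i) ω ∂μ := by
        rw [← integral_indicator (MeasurableSet.iInter fun i => hm i _ (hs i))]
        congr 1 with ω
        simp [prod_indicator_apply, Finset.prod_fn]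
    _ = ∏ i, ∫ ω in s i, X i ω ∂μ := by
        rw [h_indep.integral_fun_prod_eq_prod_integral h_meas]
        congr 1 with i
        exact integral_indicator (hm i _ (hs i))

theorem integrable_fun_prod_of_ae_abs_le_one {ι Ω : Type*} [Fintype ι]
    {mΩ : MeasurableSpace Ω} {μ : Measure Ω} [IsFiniteMeasure μ] {f : ι → Ω → ℝ}
    (hf : ∀ i, AEStronglyMeasurable (f i) μ)
    (hbdd : ∀ i, ∀ᵐ ω ∂μ, |f i ω| ≤ 1) : Integrable (fun ω => ∏ i, f i ω) μ := by
  refine .of_bound (Finset.aestronglyMeasurable_fun_prod _ fun i _ => hf i) 1 ?_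
  filter_upwards [ae_all_iff.2 hbdd] with ω hω
  rw [Real.norm_eq_abs, Finset.abs_prod]
  exact Finset.prod_le_one (fun i _ => abs_nonneg _) fun i _ => hω i

/-- Factorization of the conditional expectation of a product: if the σ-algebras
`σ(p i) ⊔ G i` are mutually independent, then
`E[∏ p i | ⨆ G i] = ∏ E[p i | G i]` almost surely. -/
theorem condexp_prod_factorization {Ω : Type*} {mΩ : MeasurableSpace Ω} (P : Measure Ω)
    [IsProbabilityMeasure P] (n : ℕ) (G : Fin n → MeasurableSpace Ω)
    (hG : ∀ i, G i ≤ mΩ) (p : Fin n → Ω → ℝ)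
    (hmeas : ∀ i, Measurable (p i))
    (hrange : ∀ i, ∀ ω, p i ω ∈ Set.Icc (0 : ℝ) 1)
    (hindep : iIndep (fun i => MeasurableSpace.comap (p i) inferInstance ⊔ G i) P) :
    P[(fun ω => ∏ i, p i ω) | ⨆ i, G i] =ᵐ[P] fun ω => ∏ i, (P[p i | G i]) ω := by
  set M : Fin n → MeasurableSpace Ω := fun i => MeasurableSpace.comap (p i) inferInstance ⊔ G i
  have hM : ∀ i, M i ≤ mΩ := fun i => sup_le (hmeas i).comap_le (hG i)
  have hGM : ∀ i, G i ≤ M i := fun i => le_sup_right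
  have hpM : ∀ i, StronglyMeasurable[M i] (p i) := fun i =>
    (comap_measurable (p i)).stronglyMeasurable.mono le_sup_left
  have hp_bdd : ∀ i, ∀ᵐ ω ∂P, |p i ω| ≤ (1 : ℝ) := fun i =>
    ae_of_all _ fun ω => abs_le.2 ⟨by linarith [(hrange i ω).1], (hrange i ω).2⟩
  have hp_int : ∀ i, Integrable (p i) P := fun i =>
    .of_bound (hmeas i).aestronglyMeasurable 1 (by simpa using hp_bdd i)
  refine (ae_eq_condExp_iSup_of_forall_setIntegral_iInter_eq hG
    (integrable_fun_prod_of_ae_abs_le_one (fun i => (hmeas i).aestronglyMeasurable) hp_bdd)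
    (integrable_fun_prod_of_ae_abs_le_one (fun i => integrable_condExp.aestronglyMeasurable)
      fun i => by simpa using ae_bdd_abs_condExp_of_ae_bdd_abs (m := G i) (hp_bdd i))
    (Finset.stronglyMeasurable_fun_prod _ fun i _ =>
      stronglyMeasurable_condExp.mono (le_iSup G i)).aestronglyMeasurable
    fun s hs => ?_).symm
  have hsM : ∀ i, MeasurableSet[M i] (s i) := fun i => hGM i _ (hs i)
  rw [hindep.setIntegral_iInter_prod hM (fun i => stronglyMeasurable_condExp.mono (hGM i)) hsM,
    hindep.setIntegral_iInter_prod hM hpM hsM]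
  exact Finset.prod_congr rfl fun i _ => setIntegral_condExp (hG i) (hp_int i) (hs i)
end

section
/- Let (Ω, F, P) be a probability space, let G_1, ..., G_n be sub-σ-algebras of F, and let p_1, ..., p_n be random variables with values in [0,1] such that the σ-algebras σ(p_1) ∨ G_1, ..., σ(p_n) ∨ G_n are mutually independent. Let G = G_1 ∨ ⋯ ∨ G_n. Then E[Var(∏_{i=1}^n p_i | G)] = ∏_{i=1}^n E[p_i²] − ∏_{i=1}^n (E[p_i²] − E[Var(p_i | G_i)]). -/
open MeasureTheory ProbabilityTheory

/-!
Conditional expectation factorises over independent blocks: `E[∏ pᵢ | ⨆ Gᵢ] = ∏ E[pᵢ | Gᵢ]`.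
For two blocks both sides have the same integral over every rectangle `A ∩ B` with `A ∈ G₁`,
`B ∈ G₂`, and the rectangles form a π-system generating `G₁ ⊔ G₂`; induction gives `n` blocks.
By independence `E[(∏ pᵢ)²] = ∏ E[pᵢ²]` and `E[(∏ E[pᵢ | Gᵢ])²] = ∏ E[E[pᵢ | Gᵢ]²]`, and
`E[Var(X | 𝒢)] = E[X²] − E[E[X | 𝒢]²]` turns both sides of the identity into
`∏ E[pᵢ²] − ∏ E[E[pᵢ | Gᵢ]²]`.
-/

namespace MeasureTheory

theorem setIntegral_eq_of_isPiSystem {Ω E : Type*} [NormedAddCommGroup E] [NormedSpace ℝ E]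
    {m m₀ : MeasurableSpace Ω} {μ : Measure Ω} (hm : m ≤ m₀) {S : Set (Set Ω)}
    (hgen : m = MeasurableSpace.generateFrom S) (hS : IsPiSystem S) {f g : Ω → E}
    (hf : Integrable f μ) (hg : Integrable g μ) (huniv : ∫ ω, f ω ∂μ = ∫ ω, g ω ∂μ)
    (hfg : ∀ s ∈ S, ∫ ω in s, f ω ∂μ = ∫ ω in s, g ω ∂μ) {s : Set Ω}
    (hs : MeasurableSet[m] s) : ∫ ω in s, f ω ∂μ = ∫ ω in s, g ω ∂μ := by
  induction s, hs using MeasurableSpace.induction_on_inter hgen hS with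
  | empty => simp
  | basic s hs => exact hfg s hs
  | compl s hs ih =>
    rw [setIntegral_compl (hm s hs) hf, setIntegral_compl (hm s hs) hg, huniv, ih]
  | iUnion s hdisj hs ih =>
    rw [integral_iUnion (fun i => hm _ (hs i)) hdisj hf.integrableOn,
      integral_iUnion (fun i => hm _ (hs i)) hdisj hg.integrableOn]
    exact tsum_congr ih

end MeasureTheory

namespace MeasurableSpace

variable {Ω : Type*}

theorem isPiSystem_image2_inter (m₁ m₂ : MeasurableSpace Ω) :
    IsPiSystem (Set.image2 (· ∩ ·) {s | MeasurableSet[m₁] s} {s | MeasurableSet[m₂] s}) := by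
  rintro _ ⟨A, hA, B, hB, rfl⟩ _ ⟨A', hA', B', hB', rfl⟩ -
  exact ⟨A ∩ A', hA.inter hA', B ∩ B', hB.inter hB', Set.inter_inter_inter_comm A A' B B'⟩

theorem sup_eq_generateFrom_image2_inter (m₁ m₂ : MeasurableSpace Ω) :
    m₁ ⊔ m₂ =
      generateFrom (Set.image2 (· ∩ ·) {s | MeasurableSet[m₁] s} {s | MeasurableSet[m₂] s}) := by
  refine le_antisymm (sup_le (fun A hA => ?_) (fun B hB => ?_)) (generateFrom_le ?_)
  · exact measurableSet_generateFrom ⟨A, hA, Set.univ, MeasurableSet.univ, Set.inter_univ A⟩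
  · exact measurableSet_generateFrom ⟨Set.univ, MeasurableSet.univ, B, hB, Set.univ_inter B⟩
  · rintro _ ⟨A, hA, B, hB, rfl⟩
    exact (le_sup_left (a := m₁) (b := m₂) A hA).inter (le_sup_right (a := m₁) (b := m₂) B hB)

end MeasurableSpace

namespace ProbabilityTheory

variable {Ω : Type*} {mΩ : MeasurableSpace Ω} {P : Measure Ω}

theorem Indep.indepFun_of_measurable {m₁ m₂ : MeasurableSpace Ω} {β γ : Type*}
    [MeasurableSpace β] [MeasurableSpace γ] (h : Indep m₁ m₂ P) {f : Ω → β} {g : Ω → γ}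
    (hf : Measurable[m₁] f) (hg : Measurable[m₂] g) : IndepFun f g P :=
  (IndepFun_iff_Indep f g P).2 (indep_of_indep_of_le h hf.comap_le hg.comap_le)

theorem Indep.setIntegral_inter_mul {m₁ m₂ : MeasurableSpace Ω} (h : Indep m₁ m₂ P)
    (hm₁ : m₁ ≤ mΩ) (hm₂ : m₂ ≤ mΩ) {f g : Ω → ℝ} (hf : StronglyMeasurable[m₁] f)
    (hg : StronglyMeasurable[m₂] g) {A B : Set Ω} (hA : MeasurableSet[m₁] A)
    (hB : MeasurableSet[m₂] B) :
    ∫ ω in A ∩ B, f ω * g ω ∂P = (∫ ω in A, f ω ∂P) * ∫ ω in B, g ω ∂P := by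
  have hfA : StronglyMeasurable[m₁] (A.indicator f) := hf.indicator hA
  have hgB : StronglyMeasurable[m₂] (B.indicator g) := hg.indicator hB
  rw [← integral_indicator ((hm₁ A hA).inter (hm₂ B hB)), ← integral_indicator (hm₁ A hA),
    ← integral_indicator (hm₂ B hB), ← IndepFun.integral_mul_eq_mul_integral
      (h.indepFun_of_measurable hfA.measurable hgB.measurable)
      (hfA.mono hm₁).aestronglyMeasurable (hgB.mono hm₂).aestronglyMeasurable]
  exact integral_congr_ae (.of_forall (Set.inter_indicator_mul f g))

theorem Indep.condExp_sup_mul [IsFiniteMeasure P] {m₁ m₂ G₁ G₂ : MeasurableSpace Ω}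
    (h : Indep m₁ m₂ P) (hm₁ : m₁ ≤ mΩ) (hm₂ : m₂ ≤ mΩ) (hG₁ : G₁ ≤ m₁) (hG₂ : G₂ ≤ m₂)
    {X Y : Ω → ℝ} (hX : StronglyMeasurable[m₁] X) (hY : StronglyMeasurable[m₂] Y)
    (hXi : Integrable X P) (hYi : Integrable Y P) :
    P[X * Y | G₁ ⊔ G₂] =ᵐ[P] P[X | G₁] * P[Y | G₂] := by
  have hG : G₁ ⊔ G₂ ≤ mΩ := sup_le (hG₁.trans hm₁) (hG₂.trans hm₂)
  have hcX : StronglyMeasurable[m₁] (P[X | G₁]) := stronglyMeasurable_condExp.mono hG₁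
  have hcY : StronglyMeasurable[m₂] (P[Y | G₂]) := stronglyMeasurable_condExp.mono hG₂
  have hXYi : Integrable (X * Y) P :=
    (h.indepFun_of_measurable hX.measurable hY.measurable).integrable_mul hXi hYi
  have hcXYi : Integrable (P[X | G₁] * P[Y | G₂]) P :=
    (h.indepFun_of_measurable hcX.measurable hcY.measurable).integrable_mul
      integrable_condExp integrable_condExp
  have hrect : ∀ s ∈ Set.image2 (· ∩ ·) {s | MeasurableSet[G₁] s} {s | MeasurableSet[G₂] s},
      ∫ ω in s, (P[X | G₁] * P[Y | G₂]) ω ∂P = ∫ ω in s, (X * Y) ω ∂P := by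
    rintro _ ⟨A, hA, B, hB, rfl⟩
    simp only [Pi.mul_apply]
    rw [h.setIntegral_inter_mul hm₁ hm₂ hcX hcY (hG₁ A hA) (hG₂ B hB),
      h.setIntegral_inter_mul hm₁ hm₂ hX hY (hG₁ A hA) (hG₂ B hB),
      setIntegral_condExp (hG₁.trans hm₁) hXi hA, setIntegral_condExp (hG₂.trans hm₂) hYi hB]
  refine (ae_eq_condExp_of_forall_setIntegral_eq hG hXYi (fun s _ _ => hcXYi.integrableOn)
    (fun s hs _ => ?_) ((stronglyMeasurable_condExp.mono le_sup_left).mul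
      (stronglyMeasurable_condExp.mono le_sup_right)).aestronglyMeasurable).symm
  refine setIntegral_eq_of_isPiSystem hG (MeasurableSpace.sup_eq_generateFrom_image2_inter G₁ G₂)
    (MeasurableSpace.isPiSystem_image2_inter G₁ G₂) hcXYi hXYi ?_ hrect hs
  simpa using hrect Set.univ ⟨_, MeasurableSet.univ, _, MeasurableSet.univ, Set.inter_self _⟩

theorem integral_condExp_sq_sub_sq_condExp [IsFiniteMeasure P] {m : MeasurableSpace Ω}
    (hm : m ≤ mΩ) {X : Ω → ℝ} (hX : MemLp X 2 P) :
    ∫ ω, ((P[fun ω' => X ω' ^ 2 | m]) ω - ((P[X | m]) ω) ^ 2) ∂P =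
      ∫ ω, X ω ^ 2 ∂P - ∫ ω, ((P[X | m]) ω) ^ 2 ∂P := by
  rw [integral_sub integrable_condExp (hX.condExp one_le_two).integrable_sq, integral_condExp hm]

variable {ι : Type*} {Q : ι → MeasurableSpace Ω} {X : ι → Ω → ℝ}

theorem stronglyMeasurable_finsetProd_biSup (hX : ∀ i, StronglyMeasurable[Q i] (X i))
    (s : Finset ι) : StronglyMeasurable[⨆ i ∈ s, Q i] (∏ i ∈ s, X i) :=
  Finset.stronglyMeasurable_prod s fun i hi =>
    (hX i).mono (le_iSup₂ (f := fun i (_ : i ∈ s) => Q i) i hi)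

theorem iIndep.indep_biSup_of_notMem (h : iIndep Q P) (hQ : ∀ i, Q i ≤ mΩ) {s : Finset ι}
    {i : ι} (hi : i ∉ s) : Indep (Q i) (⨆ j ∈ s, Q j) P := by
  simpa using indep_iSup_of_disjoint hQ h (S := {i}) (T := s) (by simpa using hi)

theorem iIndep.integrable_finsetProd [IsFiniteMeasure P] (h : iIndep Q P) (hQ : ∀ i, Q i ≤ mΩ)
    (hX : ∀ i, StronglyMeasurable[Q i] (X i)) (hXi : ∀ i, Integrable (X i) P) (s : Finset ι) :
    Integrable (∏ i ∈ s, X i) P := by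
  classical
  induction s using Finset.induction_on with
  | empty => exact integrable_const (1 : ℝ)
  | insert i s hi ih =>
    rw [Finset.prod_insert hi]
    exact ((h.indep_biSup_of_notMem hQ hi).indepFun_of_measurable (hX i).measurable
      (stronglyMeasurable_finsetProd_biSup hX s).measurable).integrable_mul (hXi i) ih

theorem iIndep.condExp_finsetProd [IsFiniteMeasure P] (h : iIndep Q P) (hQ : ∀ i, Q i ≤ mΩ)
    {G : ι → MeasurableSpace Ω} (hGQ : ∀ i, G i ≤ Q i)
    (hX : ∀ i, StronglyMeasurable[Q i] (X i)) (hXi : ∀ i, Integrable (X i) P) (s : Finset ι) :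
    P[∏ i ∈ s, X i | ⨆ i ∈ s, G i] =ᵐ[P] ∏ i ∈ s, P[X i | G i] := by
  classical
  induction s using Finset.induction_on with
  | empty =>
    rw [Finset.prod_empty, Finset.prod_empty]
    exact (condExp_const (by simp) (1 : ℝ)).eventuallyEq
  | insert i s hi ih =>
    rw [Finset.prod_insert hi, Finset.iSup_insert, Finset.prod_insert hi]
    filter_upwards [(h.indep_biSup_of_notMem hQ hi).condExp_sup_mul (hQ i)
      (iSup₂_le fun j _ => hQ j) (hGQ i) (iSup₂_mono fun j _ => hGQ j) (hX i)
      (stronglyMeasurable_finsetProd_biSup hX s) (hXi i)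
      (h.integrable_finsetProd hQ hX hXi s), ih] with ω hω hω'
    rw [hω, Pi.mul_apply, Pi.mul_apply, hω']

theorem iIndep.integral_prod [Fintype ι] (h : iIndep Q P) (hQ : ∀ i, Q i ≤ mΩ)
    (hX : ∀ i, StronglyMeasurable[Q i] (X i)) :
    ∫ ω, ∏ i, X i ω ∂P = ∏ i, ∫ ω, X i ω ∂P :=
  ((iIndepFun_iff_iIndep _ X P).2 (iIndep_of_iIndep_of_le h fun i => (hX i).measurable.comap_le)
    ).integral_fun_prod_eq_prod_integral fun i => ((hX i).mono (hQ i)).aestronglyMeasurable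

end ProbabilityTheory

/-- Bayes-risk decomposition for a product of `[0,1]`-valued random variables: if the
σ-algebras `σ(p i) ⊔ G i` are mutually independent and `G = ⨆ G i`, then
`E[Var(∏ p i | G)] = ∏ E[p i²] − ∏ (E[p i²] − E[Var(p i | G i)])`,
where `Var(X | 𝒢) = E[X² | 𝒢] − (E[X | 𝒢])²`. -/
theorem bayes_risk_decomposition {Ω : Type*} {mΩ : MeasurableSpace Ω} (P : Measure Ω)
    [IsProbabilityMeasure P] (n : ℕ) (G : Fin n → MeasurableSpace Ω)
    (hG : ∀ i, G i ≤ mΩ) (p : Fin n → Ω → ℝ)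
    (hmeas : ∀ i, Measurable (p i))
    (hrange : ∀ i, ∀ ω, p i ω ∈ Set.Icc (0 : ℝ) 1)
    (hindep : iIndep (fun i => MeasurableSpace.comap (p i) inferInstance ⊔ G i) P) :
    ∫ ω, ((P[(fun ω' => (∏ i, p i ω') ^ 2) | ⨆ i, G i]) ω
        - ((P[(fun ω' => ∏ i, p i ω') | ⨆ i, G i]) ω) ^ 2) ∂P =
      (∏ i, ∫ ω, (p i ω) ^ 2 ∂P) -
        ∏ i, ((∫ ω, (p i ω) ^ 2 ∂P) -
          ∫ ω, ((P[(fun ω' => (p i ω') ^ 2) | G i]) ω - ((P[p i | G i]) ω) ^ 2) ∂P) := by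
  set Q : Fin n → MeasurableSpace Ω := fun i => MeasurableSpace.comap (p i) inferInstance ⊔ G i
  have hQ : ∀ i, Q i ≤ mΩ := fun i => sup_le (hmeas i).comap_le (hG i)
  have hpQ : ∀ i, StronglyMeasurable[Q i] (p i) := fun i =>
    (Measurable.of_comap_le (le_sup_left : _ ≤ Q i)).stronglyMeasurable
  have hcQ : ∀ i, StronglyMeasurable[Q i] (P[p i | G i]) := fun i =>
    stronglyMeasurable_condExp.mono (le_sup_right : G i ≤ Q i)
  have hp_le : ∀ i ω, ‖p i ω‖ ≤ 1 := fun i ω => by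
    rw [Real.norm_of_nonneg (hrange i ω).1]
    exact (hrange i ω).2
  have hpL2 : ∀ i, MemLp (p i) 2 P := fun i =>
    .of_bound (hmeas i).aestronglyMeasurable 1 (.of_forall (hp_le i))
  have hprodL2 : MemLp (fun ω => ∏ i, p i ω) 2 P :=
    .of_bound (Finset.measurable_prod _ fun i _ => hmeas i).aestronglyMeasurable 1
      (.of_forall fun ω => by
        rw [norm_prod]
        exact Finset.prod_le_one (fun i _ => norm_nonneg _) fun i _ => hp_le i ω)
  have hprod : P[fun ω => ∏ i, p i ω | ⨆ i, G i] =ᵐ[P] fun ω => ∏ i, (P[p i | G i]) ω := by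
    simpa [Finset.prod_fn] using hindep.condExp_finsetProd hQ (fun i => le_sup_right) hpQ
      (fun i => (hpL2 i).integrable one_le_two) Finset.univ
  rw [integral_condExp_sq_sub_sq_condExp (iSup_le hG) hprodL2,
    integral_congr_ae (hprod.fun_pow_const 2)]
  simp_rw [integral_condExp_sq_sub_sq_condExp (hG _) (hpL2 _), sub_sub_cancel, ← Finset.prod_pow]
  rw [hindep.integral_prod (X := fun i ω => p i ω ^ 2) hQ fun i => (hpQ i).pow 2,
    hindep.integral_prod (X := fun i ω => (P[p i | G i]) ω ^ 2) hQ fun i => (hcQ i).pow 2]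
end

section
/- Let (Ω, F, P) be a probability space with a filtration (F_L)_{L∈ℕ}, and let V_1, ..., V_n be random variables measurable with respect to F_∞ = ∨_L F_L, with 0 < V_i ≤ 1 almost surely for each i. For m ∈ ℕ set L(m) = ⌊√m⌋ and U_i^{(m)} = E[V_i | F_{L(m)}]; define the two-stage allocation m_i(m) = max{ L(m), ⌊ m·√(U_i^{(m)}) / ∑_{j=1}^n √(U_j^{(m)}) ⌋ } for i = 1, ..., n−1, and m_n(m) = m − ∑_{i=1}^{n−1} m_i(m). Then for every i ∈ {1, ..., n}, m_i(m)/m → √V_i / ∑_{j=1}^n √V_j almost surely as m → ∞. -/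
open MeasureTheory ProbabilityTheory Filter Finset Topology

/-!
By Lévy's upward theorem `E[V i | F L] → V i` almost surely, so along `L = ⌊√m⌋` the estimated
proportions `√U_i / ∑ √U_j` converge to the true ones `√V_i / ∑ √V_j`. For `i < n` the floor
moves `m_i / m` by at most `1 / m` and the lower bound `⌊√m⌋` is `o(m)`, so `m_i / m`
has the same limit; the last allocation is `m` minus the others and the true proportions sum
to `1`.
-/

lemma tendsto_natSqrt_atTop : Tendsto Nat.sqrt atTop atTop :=
  tendsto_atTop_atTop.2 fun b => ⟨b * b, fun _ hm => Nat.le_sqrt.2 hm⟩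

lemma tendsto_natSqrt_div_self : Tendsto (fun m : ℕ => (Nat.sqrt m : ℝ) / m) atTop (𝓝 0) := by
  have hinv : Tendsto (fun m : ℕ => (Nat.sqrt m : ℝ)⁻¹) atTop (𝓝 0) :=
    tendsto_inv_atTop_zero.comp (tendsto_natCast_atTop_atTop.comp tendsto_natSqrt_atTop)
  refine squeeze_zero (fun _ => by positivity) (fun m => ?_) hinv
  rcases (Nat.sqrt m).eq_zero_or_pos with hs | hs
  · simp [hs]
  have hsq : (Nat.sqrt m : ℝ) * Nat.sqrt m ≤ m := by exact_mod_cast Nat.sqrt_le m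
  have hm : (0 : ℝ) < m := Nat.cast_pos.2 (Nat.sqrt_pos.1 hs)
  rw [div_le_iff₀ hm, inv_mul_eq_div, le_div_iff₀ (Nat.cast_pos.2 hs)]
  exact hsq

lemma tendsto_floor_mul_div_self {r : ℕ → ℝ} {x : ℝ} (hr : Tendsto r atTop (𝓝 x)) :
    Tendsto (fun m : ℕ => (⌊m * r m⌋ : ℝ) / m) atTop (𝓝 x) := by
  have hlower : Tendsto (fun m : ℕ => r m - 1 / m) atTop (𝓝 x) := by
    simpa using hr.sub tendsto_one_div_atTop_nhds_zero_nat
  refine tendsto_of_tendsto_of_tendsto_of_le_of_le' hlower hr ?_ ?_ <;>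
    filter_upwards [eventually_gt_atTop 0] with m hm <;>
    have hm : (0 : ℝ) < m := Nat.cast_pos.2 hm
  · rw [le_div_iff₀ hm, sub_mul, one_div_mul_cancel hm.ne', mul_comm]
    linarith [Int.sub_one_lt_floor ((m : ℝ) * r m)]
  · rw [div_le_iff₀ hm, mul_comm]
    exact Int.floor_le _

lemma tendsto_max_natSqrt_floor_div {r : ℕ → ℝ} {x : ℝ} (hr : Tendsto r atTop (𝓝 x))
    (hx : 0 ≤ x) :
    Tendsto (fun m : ℕ => ((max (Nat.sqrt m : ℤ) ⌊m * r m⌋ : ℤ) : ℝ) / m) atTop (𝓝 x) := by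
  have h := tendsto_natSqrt_div_self.max (tendsto_floor_mul_div_self hr)
  rw [max_eq_right hx] at h
  refine h.congr fun m => ?_
  push_cast
  exact max_div_div_right m.cast_nonneg _ _

lemma tendsto_sub_sum_div {ι : Type*} {s : Finset ι} {x : ℕ → ℤ} {y : ℕ → ι → ℤ} {c : ι → ℝ}
    (hx : ∀ m, x m = m - ∑ j ∈ s, y m j)
    (hy : ∀ j ∈ s, Tendsto (fun m : ℕ => (y m j : ℝ) / m) atTop (𝓝 (c j))) :
    Tendsto (fun m : ℕ => (x m : ℝ) / m) atTop (𝓝 (1 - ∑ j ∈ s, c j)) := by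
  refine (tendsto_const_nhds.sub (tendsto_finsetSum s hy)).congr' ?_
  filter_upwards [eventually_ne_atTop 0] with m hm
  rw [hx]
  push_cast
  rw [sub_div, div_self (Nat.cast_ne_zero.2 hm), sum_div]

lemma Fin.filter_val_lt_eq_erase_last (n : ℕ) :
    univ.filter (fun i : Fin (n + 1) => (i : ℕ) < n) = univ.erase (Fin.last n) := by
  ext i
  simp only [mem_filter, mem_erase, mem_univ, and_true, true_and, ne_eq, Fin.ext_iff,
    Fin.val_last]
  omega

theorem tendsto_twoStageAllocation_div {n : ℕ} {u : ℕ → Fin (n + 1) → ℝ} {v : Fin (n + 1) → ℝ}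
    (hu : ∀ j, Tendsto (fun m => u m j) atTop (𝓝 (v j))) (hv : ∑ j, √(v j) ≠ 0)
    {a : ℕ → Fin (n + 1) → ℤ}
    (ha : ∀ m (i : Fin (n + 1)), (i : ℕ) < n →
      a m i = max (Nat.sqrt m : ℤ) ⌊(m : ℝ) * √(u m i) / ∑ j, √(u m j)⌋)
    (hlast : ∀ m, a m (Fin.last n) =
      m - ∑ i ∈ univ.filter (fun i : Fin (n + 1) => (i : ℕ) < n), a m i)
    (i : Fin (n + 1)) :
    Tendsto (fun m : ℕ => (a m i : ℝ) / m) atTop (𝓝 (√(v i) / ∑ j, √(v j))) := by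
  have hfirst : ∀ i : Fin (n + 1), (i : ℕ) < n →
      Tendsto (fun m : ℕ => (a m i : ℝ) / m) atTop (𝓝 (√(v i) / ∑ j, √(v j))) := by
    intro i hi
    have hr : Tendsto (fun m => √(u m i) / ∑ j, √(u m j)) atTop (𝓝 (√(v i) / ∑ j, √(v j))) :=
      (hu i).sqrt.div (tendsto_finsetSum _ fun j _ => (hu j).sqrt) hv
    refine (tendsto_max_natSqrt_floor_div hr (by positivity)).congr fun m => ?_
    rw [ha m i hi, mul_div_assoc]
  by_cases hi : (i : ℕ) < n
  · exact hfirst i hi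
  obtain rfl : i = Fin.last n := Fin.ext (by simp only [Fin.val_last]; omega)
  have hsum : 1 - ∑ j ∈ univ.filter (fun i : Fin (n + 1) => (i : ℕ) < n), √(v j) / ∑ k, √(v k)
      = √(v (Fin.last n)) / ∑ k, √(v k) := by
    rw [Fin.filter_val_lt_eq_erase_last, sum_erase_eq_sub (mem_univ _), ← sum_div,
      div_self hv, sub_sub_cancel]
  rw [← hsum]
  exact tendsto_sub_sum_div hlast fun j hj => hfirst j (mem_filter.1 hj).2

/-- Lemma 4.1.1: the two-stage allocation sizes `m i (m)` for a parallel system of `n+1`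
components satisfy `m i (m) / m → √(V i) / ∑ √(V j)` almost surely. -/
theorem two_stage_allocation_as {Ω : Type*} {mΩ : MeasurableSpace Ω} (P : Measure Ω)
    [IsProbabilityMeasure P] (F : ℕ → MeasurableSpace Ω)
    (hFmono : Monotone F) (hFle : ∀ L, F L ≤ mΩ)
    (n : ℕ) (V : Fin (n + 1) → Ω → ℝ)
    (hVmeas : ∀ i, Measurable[⨆ L, F L] (V i))
    (hV : ∀ i, ∀ᵐ ω ∂P, V i ω ∈ Set.Ioc (0 : ℝ) 1)
    (alloc : ℕ → Fin (n + 1) → Ω → ℤ)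
    (hAlloc : ∀ m (ω : Ω) (i : Fin (n + 1)), (i : ℕ) < n →
      alloc m i ω = max (Nat.sqrt m : ℤ)
        ⌊(m : ℝ) * Real.sqrt ((P[V i | F (Nat.sqrt m)]) ω) /
          ∑ j, Real.sqrt ((P[V j | F (Nat.sqrt m)]) ω)⌋)
    (hAllocLast : ∀ m (ω : Ω),
      alloc m (Fin.last n) ω =
        (m : ℤ) - ∑ i ∈ Finset.univ.filter (fun i : Fin (n + 1) => (i : ℕ) < n),
          alloc m i ω) :
    ∀ i, ∀ᵐ ω ∂P, Tendsto (fun m => (alloc m i ω : ℝ) / m) atTop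
      (nhds (Real.sqrt (V i ω) / ∑ j, Real.sqrt (V j ω))) := by
  have hVint : ∀ j, Integrable (V j) P := fun j =>
    .of_bound ((hVmeas j).mono (iSup_le hFle) le_rfl).aestronglyMeasurable 1 <| by
      filter_upwards [hV j] with ω hω
      rw [Real.norm_eq_abs, abs_le]
      exact ⟨by linarith [hω.1], hω.2⟩
  have hlevy : ∀ j, ∀ᵐ ω ∂P, Tendsto (fun L => (P[V j | F L]) ω) atTop (𝓝 (V j ω)) :=
    fun j => (hVint j).tendsto_ae_condExp (ℱ := ⟨F, hFmono, hFle⟩) (hVmeas j).stronglyMeasurable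
  intro i
  filter_upwards [ae_all_iff.2 hV, ae_all_iff.2 hlevy] with ω hVω hlevyω
  have hsum : ∑ j, √(V j ω) ≠ 0 :=
    (sum_pos (fun j _ => Real.sqrt_pos.2 (hVω j).1) univ_nonempty).ne'
  exact tendsto_twoStageAllocation_div (fun j => (hlevyω j).comp tendsto_natSqrt_atTop) hsum
    (fun m => hAlloc m ω) (fun m => hAllocLast m ω) i
end
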